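/- (Curie–Weiss free energy.) For every t ≥ 0 and x ∈ ℝ, the limit lim_{N→∞} (1/N) log ∑_{σ ∈ {−1,1}^N} exp( (t/(2N)) (∑_{i=1}^N σ_i)² + x ∑_{i=1}^N σ_i ) exists and equals sup_{m ∈ [−1,1]} [ log 2 + log cosh(x + t m) − t m²/2 ]. -/

import Mathlib

open Real Filter Topology Finset

/-!
Write `S = ∑ σᵢ`. Completing the square, `t S² / (2N) ≥ t m S - t N m² / 2` for every `m`, with
equality at `m = S / N`, and `∑_σ exp (c S) = (2 cosh c)^N`. Hence `exp (N F(m)) ≤ Z_N` for every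
`m`, where `F` is the variational functional, which gives the lower bound. Conversely `S / N` takes
at most `N + 1` values, all in `[-1, 1]`, so `Z_N ≤ (N + 1) exp (N sup F)`, and the excess
`log (N + 1) / N` vanishes in the limit.
-/

namespace CurieWeiss

noncomputable def partitionFunction (t x : ℝ) (N : ℕ) : ℝ :=
  ∑ σ : Fin N → ({-1, 1} : Finset ℝ),
    exp ((t / (2 * N)) * (∑ i, (σ i : ℝ)) ^ 2 + x * ∑ i, (σ i : ℝ))

noncomputable def variationalFunctional (t x m : ℝ) : ℝ :=
  log 2 + log (cosh (x + t * m)) - t * m ^ 2 / 2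

noncomputable def finitePressure (t x : ℝ) (N : ℕ) : ℝ :=
  1 / (N : ℝ) * log (partitionFunction t x N)

noncomputable def variationalPressure (t x : ℝ) : ℝ :=
  ⨆ m : Set.Icc (-1 : ℝ) 1, variationalFunctional t x m

theorem partitionFunction_pos (t x : ℝ) (N : ℕ) : 0 < partitionFunction t x N :=
  sum_pos (fun _ _ => exp_pos _) ⟨fun _ => ⟨1, by simp⟩, mem_univ _⟩

theorem sum_exp_mul_sum_spins {ι : Type*} [Fintype ι] [DecidableEq ι] (c : ℝ) :
    ∑ σ : ι → ({-1, 1} : Finset ℝ), exp (c * ∑ i, (σ i : ℝ)) = (2 * cosh c) ^ Fintype.card ι := by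
  calc ∑ σ : ι → ({-1, 1} : Finset ℝ), exp (c * ∑ i, (σ i : ℝ))
      = ∑ σ : ι → ({-1, 1} : Finset ℝ), ∏ i, exp (c * σ i) := by
        simp only [mul_sum, exp_sum]
    _ = ∏ _i : ι, ∑ s : ({-1, 1} : Finset ℝ), exp (c * s) := by
        rw [prod_univ_sum, Fintype.piFinset_univ]
    _ = (2 * cosh c) ^ Fintype.card ι := by
        rw [prod_const, card_univ, sum_coe_sort ({-1, 1} : Finset ℝ) (fun s => exp (c * s)),
          sum_pair (by norm_num), cosh_eq]
        ring_nf

theorem exists_sum_spins_eq {ι : Type*} [Fintype ι] (σ : ι → ({-1, 1} : Finset ℝ)) :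
    ∃ k ≤ Fintype.card ι, ∑ i, (σ i : ℝ) = 2 * k - Fintype.card ι := by
  classical
  refine ⟨#{i | (σ i : ℝ) = 1}, card_le_univ _, ?_⟩
  have hσ (i : ι) : (σ i : ℝ) = 2 * (if (σ i : ℝ) = 1 then 1 else 0) - 1 := by
    obtain h | h : (σ i : ℝ) = -1 ∨ (σ i : ℝ) = 1 :=
      mem_insert.1 (σ i).2 |>.imp_right mem_singleton.1
    all_goals norm_num [h]
  rw [sum_congr rfl fun i _ => hσ i, sum_sub_distrib, ← mul_sum, sum_boole]
  simp

theorem linearization_le_quadratic {t n : ℝ} (ht : 0 ≤ t) (hn : 0 < n) (x m S : ℝ) :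
    -(t * n * m ^ 2 / 2) + (x + t * m) * S ≤ t / (2 * n) * S ^ 2 + x * S := by
  have hsq : t / (2 * n) * S ^ 2 + x * S - (-(t * n * m ^ 2 / 2) + (x + t * m) * S)
      = t / (2 * n) * (S - n * m) ^ 2 := by
    field_simp
    ring
  linarith [show 0 ≤ t / (2 * n) * (S - n * m) ^ 2 by positivity]

theorem quadratic_eq_linearization {n : ℝ} (hn : n ≠ 0) (t x S : ℝ) :
    t / (2 * n) * S ^ 2 + x * S = -(t * n * (S / n) ^ 2 / 2) + (x + t * (S / n)) * S := by
  field_simp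
  ring

theorem exp_mul_variationalFunctional (t x m : ℝ) (N : ℕ) :
    exp (N * variationalFunctional t x m)
      = exp (-(t * N * m ^ 2 / 2)) *
          ∑ σ : Fin N → ({-1, 1} : Finset ℝ), exp ((x + t * m) * ∑ i, (σ i : ℝ)) := by
  rw [sum_exp_mul_sum_spins, Fintype.card_fin, ← exp_log (by positivity : 0 < 2 * cosh (x + t * m)),
    ← exp_nat_mul, ← exp_add, log_mul two_ne_zero (cosh_pos _).ne', variationalFunctional]
  ring_nf

theorem bddAbove_range_variationalFunctional (t x : ℝ) :
    BddAbove (Set.range fun m : Set.Icc (-1 : ℝ) 1 => variationalFunctional t x m) := by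
  refine (isCompact_range (Continuous.comp (g := variationalFunctional t x) ?_
    continuous_subtype_val)).bddAbove
  unfold variationalFunctional
  fun_prop (disch := exact fun m => (cosh_pos _).ne')

theorem exp_mul_variationalFunctional_le {t : ℝ} (ht : 0 ≤ t) (x m : ℝ) {N : ℕ} (hN : 0 < N) :
    exp (N * variationalFunctional t x m) ≤ partitionFunction t x N := by
  rw [exp_mul_variationalFunctional, mul_sum]
  refine sum_le_sum fun σ _ => ?_
  rw [← exp_add]
  exact exp_le_exp.2 (linearization_le_quadratic ht (by positivity) _ _ _)

theorem partitionFunction_le_sum_grid (t x : ℝ) {N : ℕ} (hN : 0 < N) :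
    partitionFunction t x N
      ≤ ∑ k ∈ range (N + 1), exp (N * variationalFunctional t x ((2 * k - N) / N)) := by
  simp only [exp_mul_variationalFunctional]
  rw [sum_congr rfl fun k _ => mul_sum _ _ _, sum_comm, partitionFunction]
  refine sum_le_sum fun σ _ => ?_
  obtain ⟨k, hk, hS⟩ := exists_sum_spins_eq σ
  rw [Fintype.card_fin] at hk hS
  have hN' : (N : ℝ) ≠ 0 := by positivity
  calc exp (t / (2 * N) * (∑ i, (σ i : ℝ)) ^ 2 + x * ∑ i, (σ i : ℝ))
      = exp (-(t * N * ((2 * k - N) / N) ^ 2 / 2)) *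
          exp ((x + t * ((2 * k - N) / N)) * ∑ i, (σ i : ℝ)) := by
        rw [← exp_add, quadratic_eq_linearization hN', hS]
    _ ≤ _ := single_le_sum (f := fun j : ℕ => exp (-(t * N * ((2 * j - N) / N) ^ 2 / 2)) *
          exp ((x + t * ((2 * j - N) / N)) * ∑ i, (σ i : ℝ)))
        (fun _ _ => by positivity) (mem_range_succ_iff.2 hk)

theorem two_mul_sub_div_mem_Icc {N k : ℕ} (hN : 0 < N) (hk : k ≤ N) :
    ((2 * k - N) / N : ℝ) ∈ Set.Icc (-1) 1 := by
  have hN' : (0 : ℝ) < N := by positivity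
  have hk' : (k : ℝ) ≤ N := by exact_mod_cast hk
  constructor
  · rw [le_div_iff₀ hN']; linarith [k.cast_nonneg (α := ℝ)]
  · rw [div_le_iff₀ hN']; linarith

theorem variationalPressure_le_finitePressure {t : ℝ} (ht : 0 ≤ t) (x : ℝ) {N : ℕ} (hN : 0 < N) :
    variationalPressure t x ≤ finitePressure t x N := by
  have hN' : (0 : ℝ) < N := by positivity
  have : Nonempty (Set.Icc (-1 : ℝ) 1) := ⟨⟨0, by norm_num⟩⟩
  refine ciSup_le fun m => ?_
  rw [finitePressure, one_div, inv_mul_eq_div, le_div_iff₀ hN', mul_comm, ← log_exp (N * _)]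
  exact log_le_log (exp_pos _) (exp_mul_variationalFunctional_le ht x m hN)

theorem finitePressure_le (t x : ℝ) {N : ℕ} (hN : 0 < N) :
    finitePressure t x N ≤ variationalPressure t x + log (N + 1) / N := by
  have hN' : (0 : ℝ) < N := by positivity
  have hZ : partitionFunction t x N ≤ (N + 1) * exp (N * variationalPressure t x) := by
    calc partitionFunction t x N
        ≤ ∑ k ∈ range (N + 1), exp (N * variationalFunctional t x ((2 * k - N) / N)) :=
          partitionFunction_le_sum_grid t x hN
      _ ≤ ∑ k ∈ range (N + 1), exp (N * variationalPressure t x) := by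
          refine sum_le_sum fun k hk => exp_le_exp.2 <| mul_le_mul_of_nonneg_left ?_ hN'.le
          exact le_ciSup (bddAbove_range_variationalFunctional t x)
            ⟨_, two_mul_sub_div_mem_Icc hN (mem_range_succ_iff.1 hk)⟩
      _ = (N + 1) * exp (N * variationalPressure t x) := by simp
  have hlog := log_le_log (partitionFunction_pos t x N) hZ
  rw [log_mul (by positivity) (exp_pos _).ne', log_exp] at hlog
  rw [finitePressure, one_div, inv_mul_eq_div, div_le_iff₀ hN', add_mul, div_mul_cancel₀ _ hN'.ne']
  linarith

theorem tendsto_log_natCast_add_one_div :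
    Tendsto (fun N : ℕ => log (N + 1) / N) atTop (𝓝 0) := by
  have h := (tendsto_pow_log_div_mul_add_atTop 1 (-1) 1 one_ne_zero).comp
    (tendsto_atTop_add_const_right _ 1 tendsto_natCast_atTop_atTop)
  refine h.congr fun N => ?_
  simp

end CurieWeiss

open CurieWeiss

theorem cw_free_energy (t x : ℝ) (ht : 0 ≤ t) :
    Tendsto (fun N : ℕ =>
        (1 / (N : ℝ)) * Real.log (∑ σ : Fin N → ({-1, 1} : Finset ℝ),
          Real.exp ((t / (2 * N)) * (∑ i, (σ i : ℝ)) ^ 2 + x * ∑ i, (σ i : ℝ))))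
      atTop
      (𝓝 (⨆ m : Set.Icc (-1 : ℝ) 1,
        (Real.log 2 + Real.log (Real.cosh (x + t * m)) - t * (m : ℝ) ^ 2 / 2))) := by
  change Tendsto (finitePressure t x) atTop (𝓝 (variationalPressure t x))
  refine tendsto_of_tendsto_of_tendsto_of_le_of_le' tendsto_const_nhds
    (by simpa using tendsto_const_nhds.add tendsto_log_natCast_add_one_div) ?_ ?_
  · filter_upwards [eventually_gt_atTop 0] with N hN
    exact variationalPressure_le_finitePressure ht x hN
  · filter_upwards [eventually_gt_atTop 0] with N hN
    exact finitePressure_le t x hN
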